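/- Let R = ℤ[η, y]/(η y − 2), graded by ℤ with deg η = −1 and deg y = 1 (and ℤ in degree 0). Then the homogeneous prime ideals of R are exactly: (0); (p) for each odd prime p; (2, η); (2, y); and (2, η, y). -/

import Mathlib

/-- The ring `R = ℤ[η, y]/(η y - 2)`, where `η` is variable `0` and `y` is
variable `1`. -/
abbrev ReesRing : Type :=
  MvPolynomial (Fin 2) ℤ ⧸
    Ideal.span {(MvPolynomial.X 0 * MvPolynomial.X 1 - 2 : MvPolynomial (Fin 2) ℤ)}

namespace ReesRing

/-- The quotient map. -/
noncomputable def mk : MvPolynomial (Fin 2) ℤ →+* ReesRing :=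
  Ideal.Quotient.mk _

/-- The class of `η`. -/
noncomputable def eta : ReesRing := mk (MvPolynomial.X 0)

/-- The class of `y`. -/
noncomputable def y : ReesRing := mk (MvPolynomial.X 1)

/-- The grading weights: `deg η = -1`, `deg y = 1`. -/
def wt : Fin 2 → ℤ := ![-1, 1]

/-- An element of `R` is homogeneous of degree `n` if it is the class of a polynomial
which is weighted-homogeneous of degree `n` for the weights `deg η = -1`, `deg y = 1`. -/
def IsHomogeneous (n : ℤ) (x : ReesRing) : Prop :=
  ∃ φ : MvPolynomial (Fin 2) ℤ, φ.IsWeightedHomogeneous wt n ∧ x = mk φ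

/-- A homogeneous prime ideal: a prime ideal generated by homogeneous elements. -/
def IsHomogeneousPrime (J : Ideal ReesRing) : Prop :=
  J.IsPrime ∧ ∃ S : Set ReesRing, (∀ x ∈ S, ∃ n, IsHomogeneous n x) ∧ J = Ideal.span S

end ReesRing

/-!
Since `η y = 2`, a monomial `η^a y^b` is `2^min(a, b)` times a pure power of `η` or of `y`, so a
homogeneous element is an integer times a power of `η` or of `y`. If such elements generate a
prime `J`, each generator lies in `(J ∩ ℤ) R` or in the ideal spanned by those of `η`, `y` that
lie in `J`; hence `J = (J ∩ ℤ) R + (J ∩ {η, y})`. Here `J ∩ ℤ` is `0` or `(p)`; if `2 ∈ J`, then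
`J ∩ ℤ = (2)` and `η y = 2` puts `η` or `y` in `J`, otherwise neither lies in `J`.

Conversely, `X₀ X₁ - 2` is linear in `X₁` with coprime coefficients, hence prime in `A[X₀, X₁]`
for a factorial `A` in which `2 ≠ 0`: over `ℤ` this makes `(0)` prime, over `𝔽_p` it makes `(p)`
prime. Modulo `2` the relation becomes `X₀ X₁`, which lies in the primes `(X₀)`, `(X₁)` and
`(X₀, X₁)` of `𝔽₂[X₀, X₁]`; these give the three primes above `2`.
-/

open MvPolynomial

theorem MvPolynomial.prime_X_zero_mul_X_one_sub_two {A : Type*} [CommRing A] [IsDomain A]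
    [UniqueFactorizationMonoid A] (h2 : (2 : A) ≠ 0) :
    Prime (X 0 * X 1 - 2 : MvPolynomial (Fin 2) A) := by
  have hcoprime : IsRelPrime (X 0 : MvPolynomial (Fin 1) A) (-2) := by
    refine X_prime.irreducible.isRelPrime_iff_not_dvd.mpr fun hdvd => h2 ?_
    simpa [map_ofNat] using map_dvd constantCoeff hdvd
  have himage : finSuccEquiv A 1 (X 0 * X 1 - 2) =
      Polynomial.C (X 0) * Polynomial.X + Polynomial.C (-2) := by
    rw [map_sub, map_mul, finSuccEquiv_X_zero, ← Fin.succ_zero_eq_one, finSuccEquiv_X_succ,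
      map_ofNat, map_neg, ← map_ofNat Polynomial.C]
    ring
  rw [← UniqueFactorizationMonoid.irreducible_iff_prime,
    ← MulEquiv.irreducible_iff (finSuccEquiv A 1).toMulEquiv]
  exact himage ▸ Polynomial.irreducible_C_mul_X_add_C (X_ne_zero 0) hcoprime

theorem MvPolynomial.span_range_X_eq_ker_constantCoeff {σ R : Type*} [CommRing R] :
    Ideal.span (Set.range X) = RingHom.ker (constantCoeff : MvPolynomial σ R →+* R) := by
  ext x
  rw [← Set.image_univ, mem_ideal_span_X_image, RingHom.mem_ker, constantCoeff_eq]
  constructor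
  · intro h
    by_contra h0
    simpa using h 0 (mem_support_iff.mpr h0)
  · intro h m hm
    have : m ≠ 0 := by rintro rfl; exact mem_support_iff.mp hm h
    simpa [Finsupp.ext_iff] using this

theorem MvPolynomial.ker_map_intCastRingHom {σ : Type*} (p : ℕ) :
    RingHom.ker (map (Int.castRingHom (ZMod p)) : MvPolynomial σ ℤ →+* _) =
      Ideal.span {(p : MvPolynomial σ ℤ)} := by
  rw [ker_map, ZMod.ker_intCastRingHom, Ideal.map_span, Set.image_singleton, map_natCast]

theorem Ideal.IsPrime.pow_mem_span_inter {A : Type*} [CommRing A] {J : Ideal A}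
    (hJ : J.IsPrime) {T : Set A} {t : A} (ht : t ∈ T) {a : ℕ} (h : t ^ a ∈ J) :
    t ^ a ∈ Ideal.span (T ∩ J) := by
  rcases a.eq_zero_or_pos with rfl | ha
  · exact absurd ((J.eq_top_iff_one).mpr (by simpa using h)) hJ.ne_top
  · have ht_mem : t ∈ T ∩ J := ⟨ht, hJ.mem_of_pow_mem a h⟩
    exact Ideal.pow_mem_of_mem _ (Ideal.subset_span ht_mem) a ha

namespace ReesRing

lemma mk_surjective : Function.Surjective mk := Ideal.Quotient.mk_surjective

lemma ker_mk : RingHom.ker mk = Ideal.span {(X 0 * X 1 - 2 : MvPolynomial (Fin 2) ℤ)} :=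
  Ideal.mk_ker

instance : IsDomain ReesRing :=
  have := Ideal.isPrime_span_singleton_of_prime
    (prime_X_zero_mul_X_one_sub_two (A := ℤ) two_ne_zero)
  Ideal.Quotient.isDomain _

lemma eta_mul_y : eta * y = 2 := by
  rw [eta, y, ← map_mul, ← sub_eq_zero, ← map_ofNat mk, ← map_sub, mk,
    Ideal.Quotient.eq_zero_iff_mem]
  exact Ideal.subset_span rfl

lemma eta_pow_mul_y_pow (a b : ℕ) :
    eta ^ a * y ^ b = 2 ^ min a b * (eta ^ (a - b) * y ^ (b - a)) := by
  rcases le_total a b with h | h <;> obtain ⟨k, rfl⟩ := Nat.exists_eq_add_of_le h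
  · simp only [min_eq_left h, Nat.sub_eq_zero_of_le h, Nat.add_sub_cancel_left, pow_add,
      ← eta_mul_y, mul_pow]
    ring
  · simp only [min_eq_right h, Nat.sub_eq_zero_of_le h, Nat.add_sub_cancel_left, pow_add,
      ← eta_mul_y, mul_pow]
    ring

lemma mk_monomial (d : Fin 2 →₀ ℕ) (c : ℤ) :
    mk (monomial d c) = c * eta ^ d 0 * y ^ d 1 := by
  rw [monomial_eq, Finsupp.prod_pow, Fin.prod_univ_two, map_mul, map_mul, map_pow, map_pow,
    eq_intCast, map_intCast, mul_assoc, eta, y]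

lemma weight_wt (d : Fin 2 →₀ ℕ) : Finsupp.weight wt d = d 1 - d 0 := by
  rw [Finsupp.weight_apply, Finsupp.sum_fintype _ _ (by simp), Fin.sum_univ_two]
  simp [wt, neg_add_eq_sub]

lemma exists_eq_intCast_mul_of_isHomogeneous {n : ℤ} {x : ReesRing} (hx : IsHomogeneous n x) :
    ∃ c : ℤ, x = c * (eta ^ (-n).toNat * y ^ n.toNat) := by
  obtain ⟨φ, hφ, rfl⟩ := hx
  refine ⟨∑ d ∈ φ.support, coeff d φ * 2 ^ min (d 0) (d 1), ?_⟩
  conv_lhs => rw [← support_sum_monomial_coeff φ]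
  rw [map_sum, Int.cast_sum, Finset.sum_mul]
  refine Finset.sum_congr rfl fun d hd => ?_
  have hdeg : (d 1 : ℤ) - d 0 = n := weight_wt d ▸ hφ (mem_support_iff.mp hd)
  rw [mk_monomial, mul_assoc, eta_pow_mul_y_pow, show d 0 - d 1 = (-n).toNat by omega,
    show d 1 - d 0 = n.toNat by omega]
  push_cast
  ring

theorem isPrime_span_image_mk_sup_span_natCast {p : ℕ} {T : Set (MvPolynomial (Fin 2) ℤ)}
    (hT : (Ideal.span (map (Int.castRingHom (ZMod p)) '' T)).IsPrime)
    (hrel : map (Int.castRingHom (ZMod p)) (X 0 * X 1 - 2) ∈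
      Ideal.span (map (Int.castRingHom (ZMod p)) '' T)) :
    (Ideal.span (mk '' T) ⊔ Ideal.span {(p : ReesRing)}).IsPrime := by
  set f : MvPolynomial (Fin 2) ℤ →+* MvPolynomial (Fin 2) (ZMod p) :=
    map (Int.castRingHom (ZMod p))
  have hK : Ideal.span T ⊔ Ideal.span {(p : MvPolynomial (Fin 2) ℤ)} =
      (Ideal.span (f '' T)).comap f := by
    rw [← Ideal.map_span, Ideal.comap_map_of_surjective f
      (map_surjective _ ZMod.intCast_surjective), ← RingHom.ker_eq_comap_bot,
      ker_map_intCastRingHom]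
  have : (Ideal.span T ⊔ Ideal.span {(p : MvPolynomial (Fin 2) ℤ)}).IsPrime :=
    hK ▸ hT.comap f
  have hker : RingHom.ker mk ≤ Ideal.span T ⊔ Ideal.span {(p : MvPolynomial (Fin 2) ℤ)} := by
    rwa [ker_mk, Ideal.span_singleton_le_iff_mem, hK]
  simpa only [Ideal.map_sup, Ideal.map_span, Set.image_singleton, map_natCast] using
    Ideal.map_isPrime_of_surjective mk_surjective hker

lemma map_X_zero_mul_X_one_sub_two_zmod_two :
    map (Int.castRingHom (ZMod 2)) (X 0 * X 1 - 2 : MvPolynomial (Fin 2) ℤ) = X 0 * X 1 := by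
  simp [CharTwo.two_eq_zero]

theorem isPrime_span_natCast {p : ℕ} (hp : p.Prime) (hp2 : p ≠ 2) :
    (Ideal.span {(p : ReesRing)}).IsPrime := by
  have : Fact p.Prime := ⟨hp⟩
  have h2 : (2 : ZMod p) ≠ 0 := by
    intro h
    have : p ∣ 2 := (ZMod.natCast_eq_zero_iff 2 p).mp (by exact_mod_cast h)
    exact hp2 ((Nat.prime_dvd_prime_iff_eq hp Nat.prime_two).mp this)
  have hmk : mk (X 0 * X 1 - 2) = 0 := by
    rw [← RingHom.mem_ker, ker_mk]
    exact Ideal.mem_span_singleton_self _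
  have := isPrime_span_image_mk_sup_span_natCast (p := p) (T := {X 0 * X 1 - 2})
    (by simpa using Ideal.isPrime_span_singleton_of_prime (prime_X_zero_mul_X_one_sub_two h2))
    (by simp)
  rwa [Set.image_singleton, hmk, Ideal.span_singleton_zero, bot_sup_eq] at this

theorem isPrime_span_two_eta : (Ideal.span {2, eta}).IsPrime := by
  have := isPrime_span_image_mk_sup_span_natCast (p := 2) (T := {X 0})
    (by simpa using Ideal.isPrime_span_singleton_of_prime X_prime)
    (by simp [map_X_zero_mul_X_one_sub_two_zmod_two, Ideal.mem_span_singleton])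
  rwa [Set.image_singleton, sup_comm, ← Ideal.span_insert, Nat.cast_ofNat] at this

theorem isPrime_span_two_y : (Ideal.span {2, y}).IsPrime := by
  have := isPrime_span_image_mk_sup_span_natCast (p := 2) (T := {X 1})
    (by simpa using Ideal.isPrime_span_singleton_of_prime X_prime)
    (by simp [map_X_zero_mul_X_one_sub_two_zmod_two, Ideal.mem_span_singleton])
  rwa [Set.image_singleton, sup_comm, ← Ideal.span_insert, Nat.cast_ofNat] at this

theorem isPrime_span_two_eta_y : (Ideal.span {2, eta, y}).IsPrime := by
  have hvars : ({X 0, X 1} : Set (MvPolynomial (Fin 2) (ZMod 2))) = Set.range X := by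
    ext; simp [Fin.exists_fin_two, eq_comm]
  have := isPrime_span_image_mk_sup_span_natCast (p := 2) (T := {X 0, X 1})
    (by simpa [Set.image_insert_eq, hvars, span_range_X_eq_ker_constantCoeff] using
      RingHom.ker_isPrime _)
    (by simpa [map_X_zero_mul_X_one_sub_two_zmod_two, Set.image_insert_eq] using
      Ideal.mul_mem_right (X 1) _ (Ideal.subset_span (Set.mem_insert _ _)))
  rwa [Set.image_insert_eq, Set.image_singleton, sup_comm, ← Ideal.span_insert,
    Nat.cast_ofNat] at this

local notation "ι" => Int.castRingHom ReesRing

theorem IsHomogeneousPrime.eq_map_comap_sup_span {J : Ideal ReesRing}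
    (hJ : IsHomogeneousPrime J) :
    J = (J.comap ι).map ι ⊔ Ideal.span ({eta, y} ∩ J) := by
  obtain ⟨hprime, S, hS, hJS⟩ := hJ
  refine le_antisymm ?_ (sup_le Ideal.map_comap_le (Ideal.span_le.mpr Set.inter_subset_right))
  conv_lhs => rw [hJS]
  refine Ideal.span_le.mpr fun s hs => ?_
  have hsJ : s ∈ J := hJS ▸ Ideal.subset_span hs
  obtain ⟨n, hn⟩ := hS s hs
  obtain ⟨c, rfl⟩ := exists_eq_intCast_mul_of_isHomogeneous hn
  rcases hprime.mem_or_mem hsJ with hc | hmonomial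
  · exact Ideal.mem_sup_left (Ideal.mul_mem_right _ _
      (Ideal.mem_map_of_mem _ (Ideal.mem_comap.mpr (by simpa using hc))))
  · refine Ideal.mem_sup_right (Ideal.mul_mem_left _ _ ?_)
    rcases hprime.mem_or_mem hmonomial with heta | hy
    · exact Ideal.mul_mem_right _ _ (hprime.pow_mem_span_inter (by simp) heta)
    · exact Ideal.mul_mem_left _ _ (hprime.pow_mem_span_inter (by simp) hy)

theorem eq_span_of_two_mem {J : Ideal ReesRing} (hJ : J.IsPrime)
    (hJ_eq : J = (J.comap ι).map ι ⊔ Ideal.span ({eta, y} ∩ J)) (h2 : 2 ∈ J) :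
    J = Ideal.span {2, eta} ∨ J = Ideal.span {2, y} ∨ J = Ideal.span {2, eta, y} := by
  have hI : J.comap ι = Ideal.span {2} :=
    ((Int.ideal_span_isMaximal_of_prime 2).eq_of_le (hJ.comap ι).ne_top
      (Ideal.span_singleton_le_iff_mem _ |>.mpr (by simpa using h2))).symm
  rw [hI, Ideal.map_span, Set.image_singleton, map_ofNat] at hJ_eq
  by_cases heta : eta ∈ J <;> by_cases hy : y ∈ J
  · right; right
    rwa [Set.insert_inter_of_mem heta, Set.singleton_inter_of_mem hy,
      ← Ideal.span_insert] at hJ_eq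
  · left
    rwa [Set.insert_inter_of_mem heta, Set.singleton_inter_of_notMem hy, insert_empty_eq,
      ← Ideal.span_insert] at hJ_eq
  · right; left
    rwa [Set.insert_inter_of_notMem heta, Set.singleton_inter_of_mem hy,
      ← Ideal.span_insert] at hJ_eq
  · exact absurd (hJ.mem_or_mem (eta_mul_y ▸ h2)) (by tauto)

theorem eq_bot_or_span_natCast_of_two_notMem {J : Ideal ReesRing} (hJ : J.IsPrime)
    (hJ_eq : J = (J.comap ι).map ι ⊔ Ideal.span ({eta, y} ∩ J)) (h2 : 2 ∉ J) :
    J = ⊥ ∨ ∃ p : ℕ, p.Prime ∧ p ≠ 2 ∧ J = Ideal.span {(p : ReesRing)} := by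
  have heta : eta ∉ J := fun h => h2 (eta_mul_y ▸ J.mul_mem_right y h)
  have hy : y ∉ J := fun h => h2 (eta_mul_y ▸ J.mul_mem_left eta h)
  rw [Set.insert_inter_of_notMem heta, Set.singleton_inter_of_notMem hy, Ideal.span_empty,
    sup_bot_eq] at hJ_eq
  rcases Ideal.isPrime_int_iff.mp (hJ.comap ι) with hI | ⟨p, hp, hI⟩
  · rw [hI, Ideal.map_bot] at hJ_eq
    exact Or.inl hJ_eq
  · rw [hI, Ideal.map_span, Set.image_singleton, map_natCast] at hJ_eq
    refine Or.inr ⟨p, hp, ?_, hJ_eq⟩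
    rintro rfl
    exact h2 (hJ_eq ▸ by simp)

lemma isHomogeneous_natCast (n : ℕ) : IsHomogeneous 0 (n : ReesRing) :=
  ⟨n, map_natCast (C : ℤ →+* MvPolynomial (Fin 2) ℤ) n ▸ isWeightedHomogeneous_C wt (n : ℤ),
    (map_natCast mk n).symm⟩

lemma isHomogeneous_two : IsHomogeneous 0 (2 : ReesRing) := by
  simpa using isHomogeneous_natCast 2

lemma isHomogeneous_eta : IsHomogeneous (-1) eta :=
  ⟨X 0, by simpa [wt] using isWeightedHomogeneous_X ℤ wt 0, rfl⟩

lemma isHomogeneous_y : IsHomogeneous 1 y :=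
  ⟨X 1, by simpa [wt] using isWeightedHomogeneous_X ℤ wt 1, rfl⟩

end ReesRing

open ReesRing in
/-- STATEMENT 3: the homogeneous prime ideals of `R = ℤ[η, y]/(η y - 2)` (graded with
`deg η = -1`, `deg y = 1`) are exactly `(0)`, `(p)` for odd primes `p`, `(2, η)`,
`(2, y)` and `(2, η, y)`. -/
theorem specH_reesRing :
    {J : Ideal ReesRing | IsHomogeneousPrime J} =
      {J : Ideal ReesRing |
        J = ⊥ ∨
        (∃ p : ℕ, p.Prime ∧ p ≠ 2 ∧ J = Ideal.span {(p : ReesRing)}) ∨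
        J = Ideal.span {2, eta} ∨
        J = Ideal.span {2, y} ∨
        J = Ideal.span {2, eta, y}} := by
  ext J
  constructor
  · intro hJ
    have hJ_eq := hJ.eq_map_comap_sup_span
    by_cases h2 : (2 : ReesRing) ∈ J
    · exact Or.inr (Or.inr (eq_span_of_two_mem hJ.1 hJ_eq h2))
    · exact (eq_bot_or_span_natCast_of_two_notMem hJ.1 hJ_eq h2).imp_right Or.inl
  · rintro (rfl | ⟨p, hp, hp2, rfl⟩ | rfl | rfl | rfl)
    · exact ⟨Ideal.isPrime_bot, ∅, by simp, Ideal.span_empty.symm⟩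
    · exact ⟨isPrime_span_natCast hp hp2, _, by simpa using ⟨0, isHomogeneous_natCast p⟩, rfl⟩
    · exact ⟨isPrime_span_two_eta, _,
        by simpa using ⟨⟨0, isHomogeneous_two⟩, ⟨-1, isHomogeneous_eta⟩⟩, rfl⟩
    · exact ⟨isPrime_span_two_y, _,
        by simpa using ⟨⟨0, isHomogeneous_two⟩, ⟨1, isHomogeneous_y⟩⟩, rfl⟩
    · exact ⟨isPrime_span_two_eta_y, _, by
        simpa using ⟨⟨0, isHomogeneous_two⟩, ⟨-1, isHomogeneous_eta⟩, ⟨1, isHomogeneous_y⟩⟩, rfl⟩
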